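/- For every ring R, the nil radical N(R[x]) of the polynomial ring R[x] equals I[x] for some nil ideal I of R; that is, there is a nil ideal I of R such that a polynomial lies in the nil radical of R[x] if and only if all of its coefficients lie in I. -/

import Mathlib

/-- A two-sided ideal of a ring is nil if all of its elements are nilpotent. -/
def TwoSidedIdeal.IsNil {R : Type*} [Ring R] (I : TwoSidedIdeal R) : Prop :=
  ∀ x ∈ I, IsNilpotent x

/-- The nil radical of a ring: the sum of all its nil two-sided ideals. -/
noncomputable def nilRad (R : Type*) [Ring R] : TwoSidedIdeal R :=
  sSup {I : TwoSidedIdeal R | I.IsNil}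

/-!
Let `I` consist of the `a : R` with `C a` in the nil radical of `R[X]`: it is a nil ideal and
`I[X]` lies in the nil radical. Modulo `I`, it remains to show that the nil radical of `S[X]` is
zero once it contains no nonzero constant. Take a nonzero `f` in it of minimal degree `n ≥ 1`.
The automorphism `X ↦ X + 1` preserves the nil radical, so by minimality it fixes `f`; comparing
the coefficients of `X ^ (n - 1)` gives `n • lc f = 0`, hence `n • f = 0`, again by minimality.
Some nonzero multiple `h` of `f` is then killed by a prime `p`. A polynomial with `p`-torsion
coefficients fixed by `X ↦ X + 1` has the form `g (X ^ p - X)`, with `p * deg g ≤ deg h`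
(peel off leading terms `a (X ^ p - X) ^ e`, which are fixed because
`(X + 1) ^ p ≡ X ^ p + 1 mod p`). Since `g ↦ g (X ^ p - X)` is injective, `g` is a nonzero
element of the nil radical of degree `≤ n / p < n`, a contradiction.
-/

open Polynomial

lemma mul_pow_eq_mul_pow_of_mul_natCast_eq_zero {A : Type*} [Ring A] {c x y r : A} {p : ℕ}
    (hc : c * p = 0) (hxy : x = y + p * r) (e : ℕ) : c * x ^ e = c * y ^ e := by
  induction e with
  | zero => simp
  | succ e ih =>
    have hcy : c * y ^ e * p = 0 := by
      rw [mul_assoc, ← (Nat.cast_commute p _).eq, ← mul_assoc, hc, zero_mul]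
    rw [pow_succ, ← mul_assoc, ih, hxy, mul_add, ← mul_assoc, hcy, zero_mul, add_zero, pow_succ,
      mul_assoc]

lemma exists_prime_nsmul_nsmul_eq_zero {M : Type*} [AddMonoid M] {x : M} {n : ℕ} (hx : x ≠ 0)
    (hn : 0 < n) (hnx : n • x = 0) : ∃ p : ℕ, p.Prime ∧ ∃ m : ℕ, m • x ≠ 0 ∧ p • m • x = 0 := by
  have hord : 0 < addOrderOf x := (isOfFinAddOrder_iff_nsmul_eq_zero.2 ⟨n, hn, hnx⟩).addOrderOf_pos
  obtain ⟨p, hp, m, hm⟩ := Nat.exists_prime_and_dvd (mt AddMonoid.addOrderOf_eq_one_iff.1 hx)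
  have hm0 : m ≠ 0 := by rintro rfl; omega
  have hlt : m < addOrderOf x := hm ▸ lt_mul_left (Nat.pos_of_ne_zero hm0) hp.one_lt
  exact ⟨p, hp, m, nsmul_ne_zero_of_lt_addOrderOf hm0 hlt,
    by rw [smul_smul, ← hm, addOrderOf_nsmul_eq_zero]⟩

theorem Nat.Prime.dvd_of_nsmul_eq_zero {M : Type*} [AddMonoid M] {p d : ℕ} (hp : p.Prime)
    {a : M} (ha : a ≠ 0) (hpa : p • a = 0) (hda : d • a = 0) : p ∣ d := by
  have := Fact.mk hp
  exact addOrderOf_eq_prime hpa ha ▸ addOrderOf_dvd_of_nsmul_eq_zero hda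

namespace TwoSidedIdeal

variable {A B : Type*} [Ring A] [Ring B]

lemma mem_map_of_surjective {f : A →+* B} (hf : Function.Surjective f) {I : TwoSidedIdeal A}
    {y : B} : y ∈ I.map f ↔ ∃ x ∈ I, f x = y := by
  refine ⟨fun hy => ?_, fun ⟨x, hx, hxy⟩ => subset_span ⟨x, hx, hxy⟩⟩
  let image : TwoSidedIdeal B := .mk' (f '' I) ⟨0, I.zero_mem, map_zero f⟩
    (by rintro _ _ ⟨x, hx, rfl⟩ ⟨x', hx', rfl⟩; exact ⟨x + x', I.add_mem hx hx', map_add f x x'⟩)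
    (by rintro _ ⟨x, hx, rfl⟩; exact ⟨-x, I.neg_mem hx, map_neg f x⟩)
    (by rintro b _ ⟨x, hx, rfl⟩
        obtain ⟨a, rfl⟩ := hf b
        exact ⟨a * x, I.mul_mem_left a x hx, map_mul f a x⟩)
    (by rintro _ b ⟨x, hx, rfl⟩
        obtain ⟨a, rfl⟩ := hf b
        exact ⟨x * a, I.mul_mem_right x a hx, map_mul f x a⟩)
  have hle : I.map f ≤ image := span_le.2 fun y hy => (mem_mk' ..).2 hy
  exact (mem_mk' (f '' I) _ _ _ _ _ y).1 (hle hy)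

lemma ringCon_mk'_eq_zero_iff {I : TwoSidedIdeal A} {a : A} : I.ringCon.mk' a = 0 ↔ a ∈ I := by
  rw [← mem_ker, ker_ringCon_mk']

namespace IsNil

lemma map {f : A →+* B} (hf : Function.Surjective f) {I : TwoSidedIdeal A} (hI : I.IsNil) :
    (I.map f).IsNil := by
  intro y hy
  obtain ⟨x, hx, rfl⟩ := (mem_map_of_surjective hf).1 hy
  exact (hI x hx).map f

lemma comap {f : A →+* B} {J : TwoSidedIdeal B} (hJ : J.IsNil)
    (hker : ∀ x, f x = 0 → IsNilpotent x) : (J.comap f).IsNil := by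
  intro x hx
  obtain ⟨k, hk⟩ := hJ (f x) ((mem_comap f).1 hx)
  obtain ⟨l, hl⟩ := hker (x ^ k) (by rw [map_pow, hk])
  exact ⟨k * l, by rw [pow_mul, hl]⟩

lemma sup {I J : TwoSidedIdeal A} (hI : I.IsNil) (hJ : J.IsNil) : (I ⊔ J).IsNil := by
  intro x hx
  obtain ⟨y, hy, z, hz, rfl⟩ := mem_sup.1 hx
  obtain ⟨k, hk⟩ := hJ z hz
  have hpow : (y + z) ^ k ∈ I := ringCon_mk'_eq_zero_iff.1 <| by
    rw [map_pow, map_add, ringCon_mk'_eq_zero_iff.2 hy, zero_add, ← map_pow, hk, map_zero]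
  obtain ⟨l, hl⟩ := hI _ hpow
  exact ⟨k * l, by rw [pow_mul, hl]⟩

end IsNil

end TwoSidedIdeal

section NilRadical

variable {A B : Type*} [Ring A] [Ring B]

lemma TwoSidedIdeal.IsNil.le_nilRad {I : TwoSidedIdeal A} (hI : I.IsNil) : I ≤ nilRad A :=
  le_sSup hI

lemma mem_nilRad_iff {x : A} : x ∈ nilRad A ↔ ∃ I : TwoSidedIdeal A, I.IsNil ∧ x ∈ I := by
  refine ⟨fun hx => ?_, fun ⟨I, hI, hx⟩ => hI.le_nilRad hx⟩
  let U : TwoSidedIdeal A := .mk' {x | ∃ I : TwoSidedIdeal A, I.IsNil ∧ x ∈ I}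
    ⟨⊥, fun x hx => by simp [(TwoSidedIdeal.mem_bot _).1 hx], TwoSidedIdeal.zero_mem _⟩
    (by rintro x y ⟨I, hI, hx⟩ ⟨J, hJ, hy⟩
        exact ⟨I ⊔ J, hI.sup hJ, TwoSidedIdeal.add_mem _ (TwoSidedIdeal.mem_sup_left hx)
          (TwoSidedIdeal.mem_sup_right hy)⟩)
    (by rintro x ⟨I, hI, hx⟩; exact ⟨I, hI, I.neg_mem hx⟩)
    (by rintro a x ⟨I, hI, hx⟩; exact ⟨I, hI, I.mul_mem_left a x hx⟩)
    (by rintro x a ⟨I, hI, hx⟩; exact ⟨I, hI, I.mul_mem_right x a hx⟩)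
  have hle : nilRad A ≤ U := sSup_le fun I hI y hy => (TwoSidedIdeal.mem_mk' ..).2 ⟨I, hI, hy⟩
  exact (TwoSidedIdeal.mem_mk' _ _ _ _ _ _ x).1 (hle hx)

lemma isNil_nilRad (A : Type*) [Ring A] : (nilRad A).IsNil := fun x hx => by
  obtain ⟨I, hI, hxI⟩ := mem_nilRad_iff.1 hx
  exact hI x hxI

lemma map_mem_nilRad_of_surjective {f : A →+* B} (hf : Function.Surjective f) {x : A}
    (hx : x ∈ nilRad A) : f x ∈ nilRad B :=
  ((isNil_nilRad A).map hf).le_nilRad ((TwoSidedIdeal.mem_map_of_surjective hf).2 ⟨x, hx, rfl⟩)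

lemma mem_nilRad_of_map_mem {f : A →+* B} (hker : ∀ x, f x = 0 → IsNilpotent x) {x : A}
    (hx : f x ∈ nilRad B) : x ∈ nilRad A :=
  ((isNil_nilRad B).comap hker).le_nilRad ((TwoSidedIdeal.mem_comap f).2 hx)

end NilRadical

namespace Polynomial

variable {S : Type*} [Ring S]

noncomputable def taylorRingHom (r : S) (hr : ∀ a, Commute a r) : S[X] →+* S[X] :=
  eval₂RingHom' C (X + C r) fun a => (commute_X _).symm.add_right ((hr a).map C)

lemma taylorRingHom_apply {r : S} (hr : ∀ a, Commute a r) (f : S[X]) :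
    taylorRingHom r hr f = taylor r f :=
  rfl

lemma taylorRingHom_surjective {r : S} (hr : ∀ a, Commute a r) :
    Function.Surjective (taylorRingHom r hr) := by
  have hinv : (taylorRingHom r hr).comp (taylorRingHom (-r) fun a => (hr a).neg_right) =
      RingHom.id _ :=
    ringHom_ext (fun a => by simp [taylorRingHom_apply]) (by simp [taylorRingHom_apply])
  exact fun g => ⟨_, RingHom.congr_fun hinv g⟩

lemma taylor_mem_nilRad {r : S} (hr : ∀ a, Commute a r) {f : S[X]} (hf : f ∈ nilRad S[X]) :
    taylor r f ∈ nilRad S[X] :=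
  map_mem_nilRad_of_surjective (taylorRingHom_surjective hr) hf

lemma coeff_taylor_of_natDegree_le {r : S} {f : S[X]} {m : ℕ} (h : f.natDegree ≤ m) :
    (taylor r f).coeff m = f.coeff m := by
  rcases h.eq_or_lt with rfl | h
  · exact coeff_taylor_natDegree r f
  · rw [coeff_eq_zero_of_natDegree_lt h, coeff_eq_zero_of_natDegree_lt (by rwa [natDegree_taylor])]

lemma coeff_taylor_one_of_natDegree_eq_succ {f : S[X]} {e : ℕ} (hf : f.natDegree = e + 1) :
    (taylor 1 f).coeff e = f.coeff e + (e + 1) • f.coeff (e + 1) := by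
  have hdeg : (hasseDeriv e f).natDegree < 2 := by
    have := natDegree_hasseDeriv_le f e
    omega
  rw [taylor_coeff, eval_eq_sum_range' hdeg]
  simp [Finset.sum_range_succ, hasseDeriv_coeff, add_comm 1 e, nsmul_eq_mul]

lemma natDegree_nsmul_leadingCoeff_eq_zero_of_taylor_one_eq_self {f : S[X]}
    (h : taylor 1 f = f) : f.natDegree • f.leadingCoeff = 0 := by
  rcases hf : f.natDegree with _ | e
  · exact zero_smul ..
  have := coeff_taylor_one_of_natDegree_eq_succ hf
  rw [h, left_eq_add] at this
  rwa [leadingCoeff, hf]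

lemma Monic.eq_zero_of_comp_eq_zero {q : S[X]} (hq : q.Monic) (hq0 : q.natDegree ≠ 0)
    {g : S[X]} (h : g.comp q = 0) : g = 0 := by
  have htop := coeff_comp_degree_mul_degree (p := g) hq0
  rw [h, coeff_zero, hq.leadingCoeff, one_pow, mul_one] at htop
  exact leadingCoeff_eq_zero.1 htop.symm

lemma mem_nilRad_of_comp_mem {q : S[X]} (hq : q.Monic) (hq0 : q.natDegree ≠ 0)
    (hqc : ∀ a, Commute (C a) q) {g : S[X]} (hg : g.comp q ∈ nilRad S[X]) : g ∈ nilRad S[X] :=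
  mem_nilRad_of_map_mem (f := eval₂RingHom' C q hqc)
    (fun v hv => by rw [hq.eq_zero_of_comp_eq_zero hq0 hv]; exact .zero) hg

lemma mem_of_forall_C_coeff_mem {J : TwoSidedIdeal S[X]} {f : S[X]}
    (hf : ∀ n, C (f.coeff n) ∈ J) : f ∈ J := by
  rw [as_sum_range_C_mul_X_pow f]
  exact TwoSidedIdeal.finsetSum_mem _ _ _ fun n _ => J.mul_mem_right _ _ (hf n)

section XPowSubX

variable {p : ℕ}

lemma commute_C_X_pow_sub_X (a : S) (p : ℕ) : Commute (C a) (X ^ p - X) :=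
  ((commute_X _).symm.pow_right p).sub_right (commute_X _).symm

lemma monic_X_pow_sub_X (hp : 1 < p) : (X ^ p - X : S[X]).Monic :=
  monic_X_pow_sub (degree_X_le.trans_lt (by exact_mod_cast hp))

lemma natDegree_X_pow_sub_X [Nontrivial S] (hp : 1 < p) : (X ^ p - X : S[X]).natDegree = p := by
  rw [natDegree_sub_eq_left_of_natDegree_lt (by simpa using hp), natDegree_X_pow]

lemma exists_taylor_one_X_pow_sub_X (hp : p.Prime) :
    ∃ r : S[X], taylor 1 (X ^ p - X : S[X]) = X ^ p - X + (p : S[X]) * r := by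
  obtain ⟨r, hr⟩ := (Commute.one_right (X : S[X])).exists_add_pow_prime_eq hp
  refine ⟨X * r, ?_⟩
  rw [map_sub (taylor (1 : S)), taylor_X_pow, taylor_X, C_1, hr, one_pow, mul_one, mul_assoc]
  abel

lemma taylor_one_C_mul_X_pow_sub_X_pow (hp : p.Prime) {a : S} (ha : p • a = 0) (e : ℕ) :
    taylor 1 (C a * (X ^ p - X) ^ e) = C a * (X ^ p - X) ^ e := by
  obtain ⟨r, hr⟩ := exists_taylor_one_X_pow_sub_X (S := S) hp
  have hC : C a * (p : S[X]) = 0 := by rw [← C_eq_natCast, ← C_mul, ← nsmul_eq_mul', ha, C_0]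
  rw [← taylorRingHom_apply Commute.one_right, map_mul, map_pow, taylorRingHom_apply,
    taylorRingHom_apply, taylor_C]
  exact mul_pow_eq_mul_pow_of_mul_natCast_eq_zero hC hr e

lemma mem_nilRad_of_comp_X_pow_sub_X_mem (hp : 1 < p) {g : S[X]}
    (hg : g.comp (X ^ p - X) ∈ nilRad S[X]) : g ∈ nilRad S[X] := by
  nontriviality S
  exact mem_nilRad_of_comp_mem (monic_X_pow_sub_X hp) (by rw [natDegree_X_pow_sub_X hp]; omega)
    (commute_C_X_pow_sub_X · p) hg

end XPowSubX

lemma degree_sub_C_leadingCoeff_mul_lt {f q : S[X]} (hq : q.Monic)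
    (hqf : q.natDegree = f.natDegree) : (f - C f.leadingCoeff * q).degree < f.natDegree := by
  refine (degree_lt_iff_coeff_zero _ _).2 fun m hm => ?_
  rw [coeff_sub, coeff_C_mul]
  rcases hm.eq_or_lt with rfl | hlt
  · rw [← hqf, hq.coeff_natDegree, mul_one, hqf, leadingCoeff, sub_self]
  · rw [coeff_eq_zero_of_natDegree_lt hlt, coeff_eq_zero_of_natDegree_lt (hqf ▸ hlt), mul_zero,
      sub_zero]

section MinimalDegree

variable {J : TwoSidedIdeal S[X]} {f : S[X]}

lemma taylor_one_eq_self_of_minimal (hJ : ∀ g ∈ J, taylor 1 g ∈ J) (hf : f ∈ J)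
    (hmin : ∀ g ∈ J, g.degree < f.natDegree → g = 0) : taylor 1 f = f := by
  refine sub_eq_zero.1 <| hmin _ (J.sub_mem (hJ f hf) hf) <|
    (degree_lt_iff_coeff_zero _ _).2 fun m hm => ?_
  rw [coeff_sub, coeff_taylor_of_natDegree_le hm, sub_self]

lemma natDegree_nsmul_eq_zero_of_minimal (hJ : ∀ g ∈ J, taylor 1 g ∈ J) (hf : f ∈ J)
    (hmin : ∀ g ∈ J, g.degree < f.natDegree → g = 0) : f.natDegree • f = 0 := by
  have hτ := taylor_one_eq_self_of_minimal hJ hf hmin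
  refine hmin _ (J.nsmul_mem _ hf) ((degree_lt_iff_coeff_zero _ _).2 fun m hm => ?_)
  rw [coeff_smul]
  rcases hm.eq_or_lt with rfl | hlt
  · exact natDegree_nsmul_leadingCoeff_eq_zero_of_taylor_one_eq_self hτ
  · rw [coeff_eq_zero_of_natDegree_lt hlt, smul_zero]

end MinimalDegree

theorem exists_comp_X_pow_sub_X_eq {p : ℕ} (hp : p.Prime) {h : S[X]} (hph : p • h = 0)
    (hτ : taylor 1 h = h) :
    ∃ g : S[X], g.comp (X ^ p - X) = h ∧ p * g.natDegree ≤ h.natDegree := by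
  induction hd : h.natDegree using Nat.strong_induction_on generalizing h with | _ d ih
  rcases Nat.eq_zero_or_pos d with hd0 | hd0
  · exact ⟨C (h.coeff 0), by rw [C_comp, ← eq_C_of_natDegree_eq_zero (hd.trans hd0)], by simp⟩
  have hpa : p • h.leadingCoeff = 0 := by rw [leadingCoeff, ← coeff_smul, hph, coeff_zero]
  set a := h.leadingCoeff
  have ha : a ≠ 0 := leadingCoeff_ne_zero.2 (by rintro rfl; simp at hd; omega)
  have hda : d • a = 0 := hd ▸ natDegree_nsmul_leadingCoeff_eq_zero_of_taylor_one_eq_self hτ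
  obtain ⟨e, rfl⟩ : p ∣ d := hp.dvd_of_nsmul_eq_zero ha hpa hda
  have : Nontrivial S := ⟨⟨a, 0, ha⟩⟩
  have hL₁ : (X ^ p - X : S[X]).Monic := monic_X_pow_sub_X hp.one_lt
  have hL : ((X ^ p - X : S[X]) ^ e).Monic := hL₁.pow e
  set h' := h - C a * (X ^ p - X) ^ e
  have hdeg : h'.natDegree < p * e := by
    rcases eq_or_ne h' 0 with h0 | h0
    · rwa [h0, natDegree_zero]
    rw [natDegree_lt_iff_degree_lt h0, ← hd]
    refine degree_sub_C_leadingCoeff_mul_lt hL ?_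
    rw [hL₁.natDegree_pow, natDegree_X_pow_sub_X hp.one_lt, hd, mul_comm]
  have hph' : p • h' = 0 := by
    rw [smul_sub, hph, ← smul_mul_assoc, ← map_nsmul C, hpa, map_zero, zero_mul, sub_zero]
  have hτ' : taylor 1 h' = h' := by
    rw [map_sub, hτ, taylor_one_C_mul_X_pow_sub_X_pow hp hpa]
  obtain ⟨g', hg', hdeg'⟩ := ih _ hdeg hph' hτ' rfl
  refine ⟨g' + C a * X ^ e, by rw [add_comp, C_mul_comp, X_pow_comp, hg', sub_add_cancel], ?_⟩
  refine Nat.mul_le_mul_left p (natDegree_add_le_of_degree_le ?_ (natDegree_C_mul_X_pow_le a e))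
  exact (Nat.lt_of_mul_lt_mul_left (hdeg'.trans_lt hdeg)).le

theorem nilRad_eq_bot_of_forall_C_mem_eq_zero (hC : ∀ c : S, C c ∈ nilRad S[X] → c = 0) :
    nilRad S[X] = ⊥ := by
  classical
  refine eq_bot_iff.2 fun f₀ hf₀ => (TwoSidedIdeal.mem_bot _).2 <| by_contra fun hf₀0 => ?_
  have hex : ∃ n, ∃ f ∈ nilRad S[X], f ≠ 0 ∧ f.natDegree = n := ⟨_, f₀, hf₀, hf₀0, rfl⟩
  obtain ⟨f, hf, hf0, hfn⟩ := Nat.find_spec hex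
  have hmin : ∀ g ∈ nilRad S[X], g.degree < f.natDegree → g = 0 := fun g hg hlt => by
    by_contra hg0
    exact Nat.find_min hex (hfn ▸ (natDegree_lt_iff_degree_lt hg0).2 hlt) ⟨g, hg, hg0, rfl⟩
  have hτ : ∀ g ∈ nilRad S[X], taylor 1 g ∈ nilRad S[X] :=
    fun _ => taylor_mem_nilRad Commute.one_right
  have hn : 0 < f.natDegree := Nat.pos_of_ne_zero fun h0 => by
    rw [eq_C_of_natDegree_eq_zero h0] at hf hf0
    exact hf0 (by rw [hC _ hf, C_0])
  obtain ⟨p, hp, m, hm0, hpm⟩ :=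
    exists_prime_nsmul_nsmul_eq_zero hf0 hn (natDegree_nsmul_eq_zero_of_minimal hτ hf hmin)
  have hmτ : taylor 1 (m • f) = m • f := by rw [map_nsmul, taylor_one_eq_self_of_minimal hτ hf hmin]
  obtain ⟨g, hg, hdeg⟩ := exists_comp_X_pow_sub_X_eq hp hpm hmτ
  have hgN : g ∈ nilRad S[X] :=
    mem_nilRad_of_comp_X_pow_sub_X_mem hp.one_lt (hg ▸ TwoSidedIdeal.nsmul_mem _ m hf)
  have hg0 : g ≠ 0 := by rintro rfl; exact hm0 (by rw [← hg, zero_comp])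
  have hfg : f.natDegree ≤ g.natDegree :=
    le_of_not_gt fun hlt => hg0 (hmin g hgN ((natDegree_lt_iff_degree_lt hg0).1 hlt))
  have hmf : (m • f).natDegree ≤ f.natDegree := natDegree_smul_le _ _
  have := Nat.mul_le_mul_right g.natDegree hp.two_le
  omega

end Polynomial

/-- **Amitsur's theorem for the nil radical of polynomial rings.**  For every ring `R`, the nil
radical of the polynomial ring `R[x]` equals `I[x]` for some nil ideal `I` of `R`: there is a
nil two-sided ideal `I` of `R` such that a polynomial lies in the nil radical of `R[x]` if and
only if all of its coefficients lie in `I`. -/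
theorem nilRad_polynomial_eq_nil_ideal_polynomial {R : Type*} [Ring R] :
    ∃ I : TwoSidedIdeal R, I.IsNil ∧
      ∀ f : Polynomial R, f ∈ nilRad (Polynomial R) ↔ ∀ n : ℕ, f.coeff n ∈ I := by
  set I := (nilRad R[X]).comap C
  have hI : ∀ a, a ∈ I ↔ C a ∈ nilRad R[X] := fun a => TwoSidedIdeal.mem_comap C
  have hmem : ∀ f : R[X], (∀ n, f.coeff n ∈ I) → f ∈ nilRad R[X] :=
    fun f hf => mem_of_forall_C_coeff_mem fun n => (hI _).1 (hf n)
  refine ⟨I, (isNil_nilRad _).comap fun a ha => by rw [C_eq_zero.1 ha]; exact .zero,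
    fun f => ⟨fun hf n => ?_, hmem f⟩⟩
  let π := mapRingHom I.ringCon.mk'
  have hπ : ∀ g : R[X], π g = 0 ↔ ∀ n, g.coeff n ∈ I := fun g => by
    simp only [π, Polynomial.ext_iff, coe_mapRingHom, coeff_map, coeff_zero,
      TwoSidedIdeal.ringCon_mk'_eq_zero_iff]
  have hbot : nilRad I.ringCon.Quotient[X] = ⊥ := by
    refine nilRad_eq_bot_of_forall_C_mem_eq_zero fun c hc => ?_
    obtain ⟨a, rfl⟩ := I.ringCon.mk'_surjective c
    have : C a ∈ nilRad R[X] := mem_nilRad_of_map_mem (f := π)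
      (fun g hg => isNil_nilRad _ _ (hmem g ((hπ g).1 hg))) (by simpa [π] using hc)
    exact TwoSidedIdeal.ringCon_mk'_eq_zero_iff.2 ((hI a).2 this)
  have hπf : π f ∈ nilRad I.ringCon.Quotient[X] :=
    map_mem_nilRad_of_surjective (map_surjective _ I.ringCon.mk'_surjective) hf
  exact (hπ f).1 ((TwoSidedIdeal.mem_bot _).1 (hbot ▸ hπf)) n
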